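/- arXiv:2409.18492 — 2 statements merged into one kernel-verified Lean document; each statement's English description precedes it below -/
import Mathlib

section
/- For a finite connected network, the effective resistance between u and v equals the infimum over finite families of self-avoiding paths P₁,…,Pₙ from u to v and per-path resistances r_{e,P_k} > 0 with ∑_{k : e ∈ P_k} 1/r_{e,P_k} ≤ 1/r_e for each edge e, of (∑_k (∑_{e ∈ P_k} r_{e,P_k})^{-1})^{-1}. -/
open Finset

/-- A unit flow from `u` to `v` on the graph `G`. -/
def IsUnitFlow {V : Type*} [Fintype V] (G : SimpleGraph V) (u v : V)
    (θ : V → V → ℝ) : Prop :=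
  (∀ x y, θ x y = -θ y x) ∧
  (∀ x y, ¬ G.Adj x y → θ x y = 0) ∧
  (∀ x, x ≠ u → x ≠ v → ∑ y, θ x y = 0) ∧
  ∑ y, θ u y = 1

/-- Dirichlet energy of a flow with respect to edge resistances `r`. -/
noncomputable def flowEnergy {V : Type*} [Fintype V] (r : Sym2 V → ℝ)
    (θ : V → V → ℝ) : ℝ :=
  (1 / 2) * ∑ x, ∑ y, (θ x y) ^ 2 * r s(x, y)

/-- The effective resistance between `u` and `v`: the minimal Dirichlet energy
over unit flows from `u` to `v`. -/
noncomputable def effRes {V : Type*} [Fintype V] (G : SimpleGraph V)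
    (r : Sym2 V → ℝ) (u v : V) : ℝ :=
  sInf (flowEnergy r '' {θ | IsUnitFlow G u v θ})

/-- The set of values `(∑ₖ (∑_{e ∈ Pₖ} r_{e,Pₖ})⁻¹)⁻¹` over (nonempty) finite
families of self-avoiding paths `P₁, …, Pₙ` from `u` to `v` and per-path edge
resistances `r_{e,Pₖ} > 0` with `∑_{k : e ∈ Pₖ} 1/r_{e,Pₖ} ≤ 1/r_e` for each
edge `e`. -/
noncomputable def parallelValues {V : Type*} [Fintype V] [DecidableEq V]
    (G : SimpleGraph V) (r : Sym2 V → ℝ) (u v : V) : Set ℝ :=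
  {x | ∃ (n : ℕ) (_ : 0 < n) (P : Fin n → G.Walk u v) (ρ : Fin n → Sym2 V → ℝ),
    (∀ k, (P k).IsPath) ∧
    (∀ k e, 0 < ρ k e) ∧
    (∀ e ∈ G.edgeSet, (∑ k, if e ∈ (P k).edges then (ρ k e)⁻¹ else 0) ≤ (r e)⁻¹) ∧
    x = (∑ k, (∑ e ∈ (P k).edges.toFinset, ρ k e)⁻¹)⁻¹}

/-!
Given paths `Pₖ` with per-path resistances `r_{e,Pₖ}`, put `Rₖ = ∑_{e ∈ Pₖ} r_{e,Pₖ}` and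
`αₖ = Rₖ⁻¹ / ∑ⱼ Rⱼ⁻¹`. If `χ_P` denotes the unit flow along `P`, the unit flow `∑ₖ αₖ χ_{Pₖ}`
carries at most `∑_{k ∋ e} αₖ` through an edge `e`, so Cauchy–Schwarz and the constraint
`∑_{k ∋ e} r_{e,Pₖ}⁻¹ ≤ r_e⁻¹` bound its energy by `∑ₖ αₖ² Rₖ = (∑ₖ Rₖ⁻¹)⁻¹`.

Conversely, repeatedly subtracting a multiple of a path along which a unit flow `θ` is positive
decomposes `θ` into paths `Pₖ` with weights `wₖ` summing to `1` and total weight at most `|θ e|`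
through each edge `e`. The per-path resistances `r_{e,Pₖ} = r_e |θ e| / wₖ` then satisfy the
constraint, and with `Qₖ = ∑_{e ∈ Pₖ} r_e |θ e|` the harmonic–arithmetic mean inequality gives
`(∑ₖ wₖ / Qₖ)⁻¹ ≤ ∑ₖ wₖ Qₖ ≤ ∑_e r_e θ(e)²`.
-/

section

variable {V : Type*}

theorem sum_sum_ite_mk_mem [Fintype V] [DecidableEq V] {M : Type*} [AddCommMonoid M]
    (E : Finset (Sym2 V)) (hE : ∀ e ∈ E, ¬ e.IsDiag) (f : Sym2 V → M) :
    ∑ x, ∑ y, (if s(x, y) ∈ E then f s(x, y) else 0) = 2 • ∑ e ∈ E, f e := by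
  have hfiber : ∀ e ∈ E, ∑ x, ∑ y, (if s(x, y) = e then f e else 0) = 2 • f e := by
    intro e he
    induction e using Sym2.ind with
    | _ a b =>
      have hab : a ≠ b := fun h => hE _ he (by simp [h])
      rw [← Fintype.sum_prod_type' (fun x y => if s(x, y) = s(a, b) then f s(a, b) else 0)]
      simp [ite_or, sum_ite, filter_ne', filter_eq', hab, two_nsmul]
  calc ∑ x, ∑ y, (if s(x, y) ∈ E then f s(x, y) else 0)
      = ∑ x, ∑ y, ∑ e ∈ E, (if s(x, y) = e then f e else 0) := by simp_rw [sum_ite_eq]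
    _ = ∑ e ∈ E, ∑ x, ∑ y, (if s(x, y) = e then f e else 0) := by
      simp_rw [sum_comm (s := E)]
    _ = 2 • ∑ e ∈ E, f e := by rw [sum_congr rfl hfiber, smul_sum]

theorem inv_sum_div_le_sum_mul {ι : Type*} (s : Finset ι) {w z : ι → ℝ} (hw : ∀ i ∈ s, 0 ≤ w i)
    (hz : ∀ i ∈ s, 0 < z i) (hw₁ : ∑ i ∈ s, w i = 1) :
    (∑ i ∈ s, w i / z i)⁻¹ ≤ ∑ i ∈ s, w i * z i := by
  have hcs : (∑ i ∈ s, w i) ^ 2 ≤ (∑ i ∈ s, w i / z i) * ∑ i ∈ s, w i * z i :=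
    sum_sq_le_sum_mul_sum_of_sq_le_mul s (fun i hi => div_nonneg (hw i hi) (hz i hi).le)
      (fun i hi => mul_nonneg (hw i hi) (hz i hi).le)
      fun i hi => le_of_eq (by field_simp [(hz i hi).ne'])
  rw [hw₁, one_pow] at hcs
  have hpos : 0 < ∑ i ∈ s, w i / z i :=
    (sum_nonneg fun i hi => div_nonneg (hw i hi) (hz i hi).le).lt_of_ne fun h => by
      rw [← h, zero_mul] at hcs; linarith
  exact (inv_le_iff_one_le_mul₀' hpos).2 hcs

theorem SimpleGraph.exists_walk_of_reflTransGen {G : SimpleGraph V} {R : V → V → Prop}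
    (hR : ∀ x y, R x y → G.Adj x y) {a b : V} (h : Relation.ReflTransGen R a b) :
    ∃ q : G.Walk a b, ∀ d ∈ q.darts, R d.fst d.snd := by
  induction h using Relation.ReflTransGen.head_induction_on with
  | refl => exact ⟨.nil, by simp⟩
  | head hxy _ ih =>
    obtain ⟨q, hq⟩ := ih
    exact ⟨.cons (hR _ _ hxy) q, by simpa [hxy] using hq⟩

namespace SimpleGraph.Walk

variable [DecidableEq V] {G : SimpleGraph V} {a b : V}

theorem toFinset_edges_nonempty (p : G.Walk a b) (hab : a ≠ b) : p.edges.toFinset.Nonempty :=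
  (List.toFinset_nonempty_iff _).2 <| edges_eq_nil.not.2 <| not_nil_of_ne hab

def flow (p : G.Walk a b) (x y : V) : ℝ :=
  (p.darts.map Dart.toProd).count (x, y) - (p.darts.map Dart.toProd).count (y, x)

theorem flow_antisymm (p : G.Walk a b) (x y : V) : p.flow x y = -p.flow y x := by
  simp only [flow]; ring

@[simp]
theorem flow_nil (x y : V) : (nil : G.Walk a a).flow x y = 0 := by
  simp [flow]

theorem flow_cons {c : V} (h : G.Adj a c) (p : G.Walk c b) (x y : V) :
    (cons h p).flow x y =
      p.flow x y + ((if a = x ∧ c = y then 1 else 0) - (if a = y ∧ c = x then 1 else 0)) := by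
  simp only [flow, darts_cons, List.map_cons, List.count_cons, beq_iff_eq, Prod.mk.injEq]
  push_cast
  ring

theorem sum_flow [Fintype V] (p : G.Walk a b) (x : V) :
    ∑ y, p.flow x y = (if x = a then 1 else 0) - (if x = b then 1 else 0) := by
  induction p with
  | nil => simp
  | cons h p ih =>
    simp only [flow_cons, sum_add_distrib, sum_sub_distrib, ih]
    simp [ite_and, eq_comm]

theorem flow_eq_zero_of_notMem_edges (p : G.Walk a b) {x y : V} (h : s(x, y) ∉ p.edges) :
    p.flow x y = 0 := by
  induction p with
  | nil => simp
  | @cons w z _ h' p ih =>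
    simp only [edges_cons, List.mem_cons, not_or] at h
    have h₁ : ¬ (w = x ∧ z = y) := by rintro ⟨rfl, rfl⟩; exact h.1 rfl
    have h₂ : ¬ (w = y ∧ z = x) := by rintro ⟨rfl, rfl⟩; exact h.1 Sym2.eq_swap
    simp [flow_cons, ih h.2, h₁, h₂]

theorem IsTrail.abs_flow {p : G.Walk a b} (hp : p.IsTrail) (x y : V) :
    |p.flow x y| = if s(x, y) ∈ p.edges then 1 else 0 := by
  induction p with
  | nil => simp
  | @cons w z _ h p ih =>
    rw [isTrail_cons] at hp
    by_cases he : s(x, y) = s(w, z)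
    · have hmem : s(x, y) ∈ (cons h p).edges := by simp [he]
      rw [flow_cons, flow_eq_zero_of_notMem_edges p (he ▸ hp.2), if_pos hmem]
      rcases Sym2.eq_iff.1 he with ⟨rfl, rfl⟩ | ⟨rfl, rfl⟩ <;> simp [h.ne, h.ne.symm]
    · have h₁ : ¬ (w = x ∧ z = y) := by rintro ⟨rfl, rfl⟩; exact he rfl
      have h₂ : ¬ (w = y ∧ z = x) := by rintro ⟨rfl, rfl⟩; exact he Sym2.eq_swap
      simp [flow_cons, h₁, h₂, ih hp.1, he]

theorem exists_dart_of_flow_pos (p : G.Walk a b) {x y : V} (h : 0 < p.flow x y) :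
    ∃ d ∈ p.darts, d.toProd = (x, y) := by
  have : 0 < (p.darts.map Dart.toProd).count (x, y) := by
    unfold flow at h
    exact_mod_cast (sub_pos.1 h).trans_le' (Nat.cast_nonneg _)
  simpa using List.count_pos_iff.1 this

theorem IsTrail.abs_eq_abs_sub_mul_flow {p : G.Walk a b} {η : V → V → ℝ}
    (hp : p.IsTrail) (hη : ∀ x y, η x y = -η y x) {t : ℝ} (ht : 0 ≤ t)
    (hle : ∀ d ∈ p.darts, t ≤ η d.fst d.snd) (x y : V) :
    |η x y| = |η x y - t * p.flow x y| + t * |p.flow x y| := by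
  have hpos : ∀ x y, 0 < p.flow x y → t ≤ η x y := fun x y h => by
    obtain ⟨d, hd, hxy⟩ := p.exists_dart_of_flow_pos h
    simpa [hxy] using hle d hd
  have hχ : p.flow x y = -1 ∨ p.flow x y = 0 ∨ p.flow x y = 1 := by
    have h := hp.abs_flow x y
    split_ifs at h
    · rcases abs_eq zero_le_one |>.1 h with h | h <;> simp [h]
    · simp [abs_eq_zero.1 h]
  rcases hχ with h | h | h
  · have := hpos y x (by rw [p.flow_antisymm, h]; norm_num)
    rw [h, hη x y, abs_of_nonpos (by linarith), abs_of_nonpos (by linarith)]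
    norm_num
  · simp [h]
  · have := hpos x y (by rw [h]; norm_num)
    rw [h, abs_of_nonneg (by linarith), abs_of_nonneg (by linarith)]
    norm_num

theorem sq_sum_mul_flow_mul_le {ι : Type*} [Fintype ι] {P : ι → G.Walk a b}
    (hP : ∀ k, (P k).IsTrail) {α : ι → ℝ} (hα : ∀ k, 0 ≤ α k) {ρ : ι → Sym2 V → ℝ}
    (hρ : ∀ k e, 0 < ρ k e) {x y : V} {R : ℝ} (hR : 0 < R)
    (hcon : ∑ k, (if s(x, y) ∈ (P k).edges then (ρ k s(x, y))⁻¹ else 0) ≤ R⁻¹) :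
    (∑ k, α k * (P k).flow x y) ^ 2 * R ≤
      ∑ k, if s(x, y) ∈ (P k).edges then α k ^ 2 * ρ k s(x, y) else 0 := by
  set e := s(x, y)
  set D := ∑ k, if e ∈ (P k).edges then α k ^ 2 * ρ k e else 0
  have habs : |∑ k, α k * (P k).flow x y| ≤ ∑ k, if e ∈ (P k).edges then α k else 0 :=
    (abs_sum_le_sum_abs _ _).trans <| sum_le_sum fun k _ => by
      rw [abs_mul, (hP k).abs_flow, abs_of_nonneg (hα k)]
      split_ifs <;> simp
  have hcs : (∑ k, if e ∈ (P k).edges then α k else 0) ^ 2 ≤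
      (∑ k, if e ∈ (P k).edges then (ρ k e)⁻¹ else 0) * D := by
    refine sum_sq_le_sum_mul_sum_of_sq_le_mul _ (fun k _ => ?_) (fun k _ => ?_) (fun k _ => ?_) <;>
      have := hρ k e <;> split_ifs
    all_goals first | positivity | exact le_of_eq (by field_simp)
  have hD : 0 ≤ D := sum_nonneg fun k _ => by have := hρ k e; split_ifs <;> positivity
  calc (∑ k, α k * (P k).flow x y) ^ 2 * R
      ≤ (∑ k, if e ∈ (P k).edges then α k else 0) ^ 2 * R := by
        rw [← sq_abs]; gcongr
    _ ≤ (R⁻¹ * D) * R := by gcongr; exact hcs.trans (mul_le_mul_of_nonneg_right hcon hD)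
    _ = D := by field_simp

end SimpleGraph.Walk

section

variable [Fintype V] {G : SimpleGraph V} {u v : V} {θ : V → V → ℝ}

structure IsFlow (G : SimpleGraph V) (u v : V) (θ : V → V → ℝ) : Prop where
  antisymm : ∀ x y, θ x y = -θ y x
  eq_zero_of_not_adj : ∀ x y, ¬ G.Adj x y → θ x y = 0
  sum_eq_zero : ∀ x, x ≠ u → x ≠ v → ∑ y, θ x y = 0

variable (G u v) in
def flowSpace : Submodule ℝ (V → V → ℝ) where
  carrier := {θ | IsFlow G u v θ}
  add_mem' {θ η} hθ hη :=
    ⟨fun x y => by simp [hθ.antisymm x y, hη.antisymm x y, add_comm],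
      fun x y h => by simp [hθ.eq_zero_of_not_adj x y h, hη.eq_zero_of_not_adj x y h],
      fun x hu hv => by simp [sum_add_distrib, hθ.sum_eq_zero x hu hv, hη.sum_eq_zero x hu hv]⟩
  zero_mem' := ⟨fun _ _ => by simp, fun _ _ _ => rfl, fun _ _ _ => by simp⟩
  smul_mem' c θ hθ :=
    ⟨fun x y => by simp [hθ.antisymm x y],
      fun x y h => by simp [hθ.eq_zero_of_not_adj x y h],
      fun x hu hv => by simp [← mul_sum, hθ.sum_eq_zero x hu hv]⟩

theorem mem_flowSpace : θ ∈ flowSpace G u v ↔ IsFlow G u v θ := Iff.rfl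

theorem isUnitFlow_iff : IsUnitFlow G u v θ ↔ IsFlow G u v θ ∧ ∑ y, θ u y = 1 :=
  ⟨fun ⟨h₁, h₂, h₃, h₄⟩ => ⟨⟨h₁, h₂, h₃⟩, h₄⟩, fun ⟨⟨h₁, h₂, h₃⟩, h₄⟩ => ⟨h₁, h₂, h₃, h₄⟩⟩

variable [DecidableEq V]

theorem SimpleGraph.Walk.isFlow_flow (p : G.Walk u v) : IsFlow G u v p.flow where
  antisymm := p.flow_antisymm
  eq_zero_of_not_adj _ _ h := p.flow_eq_zero_of_notMem_edges fun he => h (p.edges_subset_edgeSet he)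
  sum_eq_zero x hu hv := by simp [p.sum_flow, hu, hv]

theorem SimpleGraph.Walk.sum_flow_start (huv : u ≠ v) (p : G.Walk u v) : ∑ y, p.flow u y = 1 := by
  simp [p.sum_flow, huv]

theorem isUnitFlow_sum_smul_flow {ι : Type*} [Fintype ι] (huv : u ≠ v) (P : ι → G.Walk u v)
    {α : ι → ℝ} (hα : ∑ k, α k = 1) : IsUnitFlow G u v (∑ k, α k • (P k).flow) := by
  refine isUnitFlow_iff.2 ⟨mem_flowSpace.1 <| Submodule.sum_mem _ fun k _ =>
    Submodule.smul_mem _ _ (P k).isFlow_flow, ?_⟩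
  simp only [Finset.sum_apply, Pi.smul_apply, smul_eq_mul]
  rw [sum_comm]
  simp [← mul_sum, (P _).sum_flow_start huv, hα]

end

section

variable [Fintype V] [DecidableEq V] {G : SimpleGraph V} {u v : V} {η : V → V → ℝ}

theorem IsFlow.sum_sum_compl (hη : IsFlow G u v η) {T : Finset V} (hu : u ∈ T) (hv : v ∉ T) :
    ∑ x ∈ T, ∑ y ∈ Tᶜ, η x y = ∑ y, η u y := by
  have hinner : ∑ x ∈ T, ∑ y ∈ T, η x y = 0 := by
    have h : ∑ x ∈ T, ∑ y ∈ T, η x y = ∑ x ∈ T, ∑ y ∈ T, -η x y := by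
      rw [sum_comm]
      exact sum_congr rfl fun x _ => sum_congr rfl fun y _ => hη.antisymm y x
    simp only [sum_neg_distrib] at h
    linarith
  have hout : ∑ x ∈ T, ∑ y, η x y = ∑ y, η u y :=
    sum_eq_single_of_mem u hu fun x hx hxu => hη.sum_eq_zero x hxu (by rintro rfl; exact hv hx)
  have hsplit : ∀ x, ∑ y, η x y = ∑ y ∈ T, η x y + ∑ y ∈ Tᶜ, η x y := fun x =>
    (sum_add_sum_compl T _).symm
  simp_rw [← hout, hsplit, sum_add_distrib, hinner, zero_add]

theorem IsFlow.exists_isPath_forall_pos (hη : IsFlow G u v η) (hs : 0 < ∑ y, η u y) :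
    ∃ p : G.Walk u v, p.IsPath ∧ ∀ d ∈ p.darts, 0 < η d.fst d.snd := by
  classical
  have hreach : Relation.ReflTransGen (fun x y => 0 < η x y) u v := by
    by_contra hv
    let T : Finset V := {y | Relation.ReflTransGen (fun x y => 0 < η x y) u y}
    have hcut : ∑ x ∈ T, ∑ y ∈ Tᶜ, η x y ≤ 0 :=
      sum_nonpos fun x hx => sum_nonpos fun y hy => not_lt.1 fun hxy =>
        mem_compl.1 hy (by simp only [T, mem_filter_univ] at hx ⊢; exact hx.tail hxy)
    rw [hη.sum_sum_compl (by simpa [T] using Relation.ReflTransGen.refl) (by simpa [T] using hv)]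
      at hcut
    linarith
  obtain ⟨q, hq⟩ := SimpleGraph.exists_walk_of_reflTransGen
    (fun x y hxy => by_contra fun h => hxy.ne' (hη.eq_zero_of_not_adj x y h)) hreach
  exact ⟨q.bypass, q.bypass_isPath, fun d hd => hq d (q.darts_bypass_subset_darts hd)⟩

end

structure WeightedPaths (G : SimpleGraph V) (u v : V) where
  n : ℕ
  weight : Fin n → ℝ
  path : Fin n → G.Walk u v
  weight_pos : ∀ k, 0 < weight k
  isPath : ∀ k, (path k).IsPath

namespace WeightedPaths

variable {G : SimpleGraph V} {u v : V}

def total (W : WeightedPaths G u v) : ℝ := ∑ k, W.weight k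

def load [DecidableEq V] (W : WeightedPaths G u v) (e : Sym2 V) : ℝ :=
  ∑ k, if e ∈ (W.path k).edges then W.weight k else 0

def empty : WeightedPaths G u v :=
  ⟨0, Fin.elim0, Fin.elim0, fun k => k.elim0, fun k => k.elim0⟩

def cons (W : WeightedPaths G u v) {t : ℝ} (ht : 0 < t) {p : G.Walk u v} (hp : p.IsPath) :
    WeightedPaths G u v :=
  ⟨W.n + 1, Fin.cons t W.weight, Fin.cons p W.path, Fin.cases ht W.weight_pos,
    Fin.cases hp W.isPath⟩

@[simp]
theorem total_empty : (empty : WeightedPaths G u v).total = 0 := rfl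

@[simp]
theorem load_empty [DecidableEq V] (e : Sym2 V) : (empty : WeightedPaths G u v).load e = 0 := rfl

@[simp]
theorem total_cons (W : WeightedPaths G u v) {t : ℝ} (ht : 0 < t) {p : G.Walk u v}
    (hp : p.IsPath) : (W.cons ht hp).total = t + W.total :=
  Fin.sum_univ_succ _

@[simp]
theorem load_cons [DecidableEq V] (W : WeightedPaths G u v) {t : ℝ} (ht : 0 < t) {p : G.Walk u v}
    (hp : p.IsPath) (e : Sym2 V) :
    (W.cons ht hp).load e = (if e ∈ p.edges then t else 0) + W.load e :=
  Fin.sum_univ_succ _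

theorem weight_le_load [DecidableEq V] (W : WeightedPaths G u v) {k : Fin W.n} {e : Sym2 V}
    (he : e ∈ (W.path k).edges) : W.weight k ≤ W.load e := by
  refine le_of_eq_of_le (if_pos he).symm
    (single_le_sum (f := fun j => if e ∈ (W.path j).edges then W.weight j else 0) ?_ (mem_univ k))
  intro j _
  split_ifs
  exacts [(W.weight_pos j).le, le_rfl]

end WeightedPaths

section

variable [Fintype V] [DecidableEq V] {G : SimpleGraph V} {u v : V} {η : V → V → ℝ}

-- `t` is the least value of `η` along a path of positive flow, capped by the strength. Unless the
-- cap is attained, subtracting `t` along the path kills the minimizing dart and creates no new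
-- support.
theorem IsFlow.exists_peel (huv : u ≠ v) (hη : IsFlow G u v η) (hs : 0 < ∑ y, η u y) :
    ∃ (p : G.Walk u v) (t : ℝ), p.IsPath ∧ 0 < t ∧ t ≤ ∑ y, η u y ∧
      (∀ x y, |η x y| = |η x y - t * p.flow x y| + t * |p.flow x y|) ∧
      (t = ∑ y, η u y ∨
        #{xy : V × V | η xy.1 xy.2 - t * p.flow xy.1 xy.2 ≠ 0} <
          #{xy : V × V | η xy.1 xy.2 ≠ 0}) := by
  obtain ⟨p, hp, hpos⟩ := hη.exists_isPath_forall_pos hs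
  obtain ⟨d₀, hd₀, hmin⟩ := p.darts.toFinset.exists_min_image (fun d => η d.fst d.snd)
    (List.toFinset_nonempty_iff _ |>.2 <| SimpleGraph.Walk.darts_eq_nil.not.2 <|
      SimpleGraph.Walk.not_nil_of_ne huv)
  simp only [List.mem_toFinset] at hd₀ hmin
  set t := min (η d₀.fst d₀.snd) (∑ y, η u y)
  have ht : 0 < t := lt_min (hpos d₀ hd₀) hs
  have habs := hp.isTrail.abs_eq_abs_sub_mul_flow hη.antisymm ht.le
    fun d hd => (min_le_left _ _).trans (hmin d hd)
  refine ⟨p, t, hp, ht, min_le_right _ _, habs, or_iff_not_imp_left.2 fun hts => ?_⟩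
  have htd : t = η d₀.fst d₀.snd := (min_choice _ _).resolve_right hts
  refine card_lt_card <| (ssubset_iff_of_subset ?_).2 ⟨(d₀.fst, d₀.snd), ?_, ?_⟩
  · intro xy
    simp only [mem_filter_univ]
    contrapose!
    intro h0
    have := habs xy.1 xy.2
    rw [h0] at this ⊢
    rw [abs_zero] at this
    have := mul_nonneg ht.le (abs_nonneg (p.flow xy.1 xy.2))
    exact abs_eq_zero.1 (le_antisymm (by linarith) (abs_nonneg _))
  · simpa using (hpos d₀ hd₀).ne'
  · have hedge : s(d₀.fst, d₀.snd) ∈ p.edges :=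
      p.edges_eq_map_darts ▸ List.mem_map_of_mem hd₀
    have := habs d₀.fst d₀.snd
    rw [hp.isTrail.abs_flow, if_pos hedge, abs_of_pos (hpos d₀ hd₀)] at this
    simpa using abs_eq_zero.1 (by linarith)

theorem IsFlow.exists_weightedPaths (huv : u ≠ v) (hη : IsFlow G u v η)
    (hs : 0 ≤ ∑ y, η u y) :
    ∃ W : WeightedPaths G u v, W.total = ∑ y, η u y ∧ ∀ x y, W.load s(x, y) ≤ |η x y| := by
  induction hN : #{xy : V × V | η xy.1 xy.2 ≠ 0} using Nat.strong_induction_on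
    generalizing η with
  | _ N ih =>
  rcases hs.eq_or_lt with hs | hs
  · exact ⟨.empty, by simp [hs], by simp⟩
  obtain ⟨p, t, hp, ht, hts, habs, hcases⟩ := hη.exists_peel huv hs
  set η' := η - t • p.flow
  have hη' : IsFlow G u v η' :=
    mem_flowSpace.1 <| Submodule.sub_mem _ hη (Submodule.smul_mem _ t p.isFlow_flow)
  have hs' : ∑ y, η' u y = ∑ y, η u y - t := by
    simp [η', sum_sub_distrib, ← mul_sum, p.sum_flow_start huv]
  obtain ⟨W, hW, hload⟩ :
      ∃ W : WeightedPaths G u v, W.total = ∑ y, η' u y ∧ ∀ x y, W.load s(x, y) ≤ |η' x y| := by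
    rcases hcases with hts | hlt
    · exact ⟨.empty, by simp [hs', hts], by simp⟩
    · exact ih _ (hN ▸ hlt) hη' (by linarith) rfl
  refine ⟨W.cons ht hp, by simp [hW, hs'], fun x y => ?_⟩
  rw [WeightedPaths.load_cons, habs x y, hp.isTrail.abs_flow]
  have := hload x y
  split_ifs <;> simp only [η', Pi.sub_apply, Pi.smul_apply, smul_eq_mul] at this <;> linarith

end

section

variable [Fintype V] [DecidableEq V] {G : SimpleGraph V} {u v : V} {r : Sym2 V → ℝ}

theorem sum_sum_sum_ite_mem_edges {ι : Type*} [Fintype ι] (P : ι → G.Walk u v)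
    (g : ι → Sym2 V → ℝ) :
    ∑ x, ∑ y, ∑ k, (if s(x, y) ∈ (P k).edges then g k s(x, y) else 0) =
      2 * ∑ k, ∑ e ∈ (P k).edges.toFinset, g k e := by
  have hk : ∀ k, ∑ x, ∑ y, (if s(x, y) ∈ (P k).edges then g k s(x, y) else 0) =
      2 * ∑ e ∈ (P k).edges.toFinset, g k e := fun k => by
    simpa using sum_sum_ite_mk_mem (P k).edges.toFinset (fun e he => G.not_isDiag_of_mem_edgeSet
      ((P k).edges_subset_edgeSet (List.mem_toFinset.1 he))) (g k)
  simp_rw [sum_comm (α := ι), hk, mul_sum]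

theorem flowEnergy_sum_smul_flow_le {ι : Type*} [Fintype ι] (hr : ∀ e ∈ G.edgeSet, 0 < r e)
    {P : ι → G.Walk u v} (hP : ∀ k, (P k).IsTrail) {α : ι → ℝ} (hα : ∀ k, 0 ≤ α k)
    {ρ : ι → Sym2 V → ℝ} (hρ : ∀ k e, 0 < ρ k e)
    (hcon : ∀ e ∈ G.edgeSet, (∑ k, if e ∈ (P k).edges then (ρ k e)⁻¹ else 0) ≤ (r e)⁻¹) :
    flowEnergy r (∑ k, α k • (P k).flow) ≤
      ∑ k, α k ^ 2 * ∑ e ∈ (P k).edges.toFinset, ρ k e := by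
  calc flowEnergy r (∑ k, α k • (P k).flow)
      ≤ 1 / 2 * ∑ x, ∑ y, ∑ k, if s(x, y) ∈ (P k).edges then α k ^ 2 * ρ k s(x, y) else 0 := by
        unfold flowEnergy
        gcongr with x _ y _
        simp only [Finset.sum_apply, Pi.smul_apply, smul_eq_mul]
        by_cases hxy : G.Adj x y
        · exact SimpleGraph.Walk.sq_sum_mul_flow_mul_le hP hα hρ (hr s(x, y) hxy) (hcon _ hxy)
        · simp only [fun k => (P k).isFlow_flow.eq_zero_of_not_adj x y hxy, mul_zero,
            sum_const_zero]
          exact le_of_eq_of_le (by ring) <|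
            sum_nonneg fun k _ => by have := hρ k s(x, y); split_ifs <;> positivity
    _ = ∑ k, α k ^ 2 * ∑ e ∈ (P k).edges.toFinset, ρ k e := by
        rw [sum_sum_sum_ite_mem_edges P fun k e => α k ^ 2 * ρ k e]
        simp [mul_sum]

theorem exists_isUnitFlow_flowEnergy_le (huv : u ≠ v) (hr : ∀ e ∈ G.edgeSet, 0 < r e) {x : ℝ}
    (hx : x ∈ parallelValues G r u v) : ∃ θ, IsUnitFlow G u v θ ∧ flowEnergy r θ ≤ x := by
  obtain ⟨n, hn, P, ρ, hP, hρ, hcon, rfl⟩ := hx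
  set R : Fin n → ℝ := fun k => ∑ e ∈ (P k).edges.toFinset, ρ k e
  have hR : ∀ k, 0 < R k := fun k =>
    sum_pos (fun e _ => hρ k e) ((P k).toFinset_edges_nonempty huv)
  set C := ∑ k, (R k)⁻¹
  have hC : 0 < C := sum_pos (fun k _ => inv_pos.2 (hR k)) ⟨⟨0, hn⟩, mem_univ _⟩
  set α : Fin n → ℝ := fun k => (R k)⁻¹ / C
  have hα : ∑ k, α k = 1 := by rw [← sum_div, div_self hC.ne']
  refine ⟨_, isUnitFlow_sum_smul_flow huv P hα, ?_⟩
  calc flowEnergy r (∑ k, α k • (P k).flow) ≤ ∑ k, α k ^ 2 * R k :=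
        flowEnergy_sum_smul_flow_le hr (fun k => (hP k).isTrail)
          (fun k => (div_pos (inv_pos.2 (hR k)) hC).le) hρ hcon
    _ = C⁻¹ := by
        have hk : ∀ k, α k ^ 2 * R k = (R k)⁻¹ / C ^ 2 := fun k => by
          simp only [α]
          field_simp [(hR k).ne']
        rw [sum_congr rfl fun k _ => hk k, ← sum_div, sq, ← div_div, div_self hC.ne', one_div]

theorem WeightedPaths.sum_weight_mul_le_flowEnergy (W : WeightedPaths G u v)
    (hr : ∀ e ∈ G.edgeSet, 0 < r e) {θ : V → V → ℝ} (hθ : ∀ x y, ¬ G.Adj x y → θ x y = 0)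
    {F : Sym2 V → ℝ} (hF : ∀ x y, F s(x, y) = |θ x y|) (hload : ∀ e, W.load e ≤ F e) :
    ∑ k, W.weight k * ∑ e ∈ (W.path k).edges.toFinset, r e * F e ≤ flowEnergy r θ := by
  calc ∑ k, W.weight k * ∑ e ∈ (W.path k).edges.toFinset, r e * F e
      = 1 / 2 * ∑ x, ∑ y, r s(x, y) * F s(x, y) * W.load s(x, y) := by
        have hrow : ∀ x y, r s(x, y) * F s(x, y) * W.load s(x, y) = ∑ k,
            if s(x, y) ∈ (W.path k).edges then W.weight k * (r s(x, y) * F s(x, y)) else 0 :=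
          fun x y => by rw [mul_comm, WeightedPaths.load, sum_mul]; simp only [ite_mul, zero_mul]
        simp_rw [hrow]
        rw [sum_sum_sum_ite_mem_edges W.path fun k e => W.weight k * (r e * F e), ← mul_assoc,
          one_div, inv_mul_cancel₀ two_ne_zero, one_mul]
        simp only [mul_sum]
    _ ≤ flowEnergy r θ := by
        refine mul_le_mul_of_nonneg_left (sum_le_sum fun x _ => sum_le_sum fun y _ => ?_)
          (by norm_num)
        rw [hF]
        by_cases hxy : G.Adj x y
        · have := hr s(x, y) hxy
          calc r s(x, y) * |θ x y| * W.load s(x, y) ≤ r s(x, y) * |θ x y| * |θ x y| := by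
                gcongr; exact (hF x y).symm ▸ hload s(x, y)
            _ = θ x y ^ 2 * r s(x, y) := by rw [mul_assoc, abs_mul_abs_self]; ring
        · simp [hθ x y hxy]

theorem WeightedPaths.exists_mem_parallelValues_le (W : WeightedPaths G u v) (huv : u ≠ v)
    (hr : ∀ e ∈ G.edgeSet, 0 < r e) (hW : W.total = 1) {F : Sym2 V → ℝ} (hF₀ : ∀ e, 0 ≤ F e)
    (hload : ∀ e, W.load e ≤ F e) :
    ∃ x ∈ parallelValues G r u v,
      x ≤ ∑ k, W.weight k * ∑ e ∈ (W.path k).edges.toFinset, r e * F e := by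
  have hF : ∀ k, ∀ e ∈ (W.path k).edges, 0 < r e * F e := fun k e he =>
    mul_pos (hr e ((W.path k).edges_subset_edgeSet he))
      ((W.weight_pos k).trans_le ((W.weight_le_load he).trans (hload e)))
  set Q : Fin W.n → ℝ := fun k => ∑ e ∈ (W.path k).edges.toFinset, r e * F e
  have hQ : ∀ k, 0 < Q k := fun k => sum_pos (fun e he => hF k e (List.mem_toFinset.1 he))
    ((W.path k).toFinset_edges_nonempty huv)
  let ρ : Fin W.n → Sym2 V → ℝ := fun k e =>
    if e ∈ (W.path k).edges then r e * F e / W.weight k else 1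
  have hρ : ∀ k e, 0 < ρ k e := fun k e => by
    unfold ρ
    split_ifs with he
    exacts [div_pos (hF k e he) (W.weight_pos k), one_pos]
  have hcon : ∀ e ∈ G.edgeSet,
      (∑ k, if e ∈ (W.path k).edges then (ρ k e)⁻¹ else 0) ≤ (r e)⁻¹ := fun e he => by
    have hk : ∀ k, (if e ∈ (W.path k).edges then (ρ k e)⁻¹ else 0) =
        (if e ∈ (W.path k).edges then W.weight k else 0) / (r e * F e) := fun k => by
      split_ifs with hek <;> simp [ρ, hek, inv_div]
    rw [sum_congr rfl fun k _ => hk k, ← sum_div]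
    refine div_le_of_le_mul₀ (mul_nonneg (hr e he).le (hF₀ e)) (inv_nonneg.2 (hr e he).le) ?_
    rw [inv_mul_cancel_left₀ (hr e he).ne']
    exact hload e
  have hn : 0 < W.n := Fin.pos_iff_nonempty.2 <| univ_nonempty_iff.1 <|
    nonempty_of_sum_ne_zero <| hW.symm ▸ one_ne_zero
  have hsumρ : ∀ k, ∑ e ∈ (W.path k).edges.toFinset, ρ k e = Q k / W.weight k := fun k => by
    rw [sum_div]
    exact sum_congr rfl fun e he => if_pos (List.mem_toFinset.1 he)
  refine ⟨_, ⟨W.n, hn, W.path, ρ, W.isPath, hρ, hcon, rfl⟩, ?_⟩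
  calc (∑ k, (∑ e ∈ (W.path k).edges.toFinset, ρ k e)⁻¹)⁻¹
      = (∑ k, W.weight k / Q k)⁻¹ := by simp only [hsumρ, inv_div]
    _ ≤ ∑ k, W.weight k * Q k :=
        inv_sum_div_le_sum_mul _ (fun k _ => (W.weight_pos k).le) (fun k _ => hQ k) hW

theorem exists_mem_parallelValues_le_flowEnergy (huv : u ≠ v) (hr : ∀ e ∈ G.edgeSet, 0 < r e)
    {θ : V → V → ℝ} (hθ : IsUnitFlow G u v θ) :
    ∃ x ∈ parallelValues G r u v, x ≤ flowEnergy r θ := by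
  obtain ⟨hθ, hs⟩ := isUnitFlow_iff.1 hθ
  obtain ⟨W, hW, hload⟩ := hθ.exists_weightedPaths huv (hs ▸ zero_le_one)
  let F : Sym2 V → ℝ := Sym2.lift ⟨fun x y => |θ x y|, fun x y => by
    show |θ x y| = |θ y x|
    rw [hθ.antisymm, abs_neg]⟩
  have hloadF : ∀ e, W.load e ≤ F e := Sym2.ind hload
  obtain ⟨x, hx, hle⟩ := W.exists_mem_parallelValues_le huv hr (hW.trans hs)
    (Sym2.ind fun x y => abs_nonneg (θ x y)) hloadF
  exact ⟨x, hx, hle.trans <|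
    W.sum_weight_mul_le_flowEnergy hr hθ.eq_zero_of_not_adj (fun _ _ => rfl) hloadF⟩

end

end

theorem effRes_eq_inf_parallelValues_general {V : Type*} [Fintype V] [DecidableEq V]
    (G : SimpleGraph V)
    (r : Sym2 V → ℝ) (hr : ∀ e ∈ G.edgeSet, 0 < r e)
    (u v : V) (huv : u ≠ v) :
    effRes G r u v = sInf (parallelValues G r u v) := by
  refine csInf_eq_csInf_of_forall_exists_le ?_ ?_
  · rintro _ ⟨θ, hθ, rfl⟩
    exact exists_mem_parallelValues_le_flowEnergy huv hr hθ
  · intro x hx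
    obtain ⟨θ, hθ, hle⟩ := exists_isUnitFlow_flowEnergy_le huv hr hx
    exact ⟨_, ⟨θ, hθ, rfl⟩, hle⟩

/-- **Generalized parallel law**: for a finite connected network with positive
edge resistances, the effective resistance between `u` and `v` equals the
infimum of `(∑ₖ (∑_{e ∈ Pₖ} r_{e,Pₖ})⁻¹)⁻¹` over all families of self-avoiding
paths from `u` to `v` and per-path resistances as above. -/
theorem effRes_eq_inf_parallelValues {V : Type*} [Fintype V] [DecidableEq V]
    (G : SimpleGraph V) (hG : G.Connected)
    (r : Sym2 V → ℝ) (hr : ∀ e ∈ G.edgeSet, 0 < r e)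
    (u v : V) (huv : u ≠ v) :
    effRes G r u v = sInf (parallelValues G r u v) :=
  effRes_eq_inf_parallelValues_general G r hr u v huv
end

section
/- Max-Flow-Min-Cut: in a finite network G where each edge e has capacity w(e) ≥ 0, and for disjoint vertex sets A and Z, the maximal strength of a flow θ from A to Z satisfying |θ(e)| ≤ w(e) for all directed edges equals the minimum over cut sets π separating A from Z of ∑_{e ∈ π} w(e). -/
/-!
A capacitated flow of maximal strength exists because such flows form a compact set. Call a
dart residual when the flow along it is below its capacity, and let `S` be the set of vertices
reachable from `A` along residual darts. If `S` met `Z`, pushing a small multiple of the unit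
flow of a residual walk from `A` to `Z` would increase the strength, so `S` contains `A` and
misses `Z`. Since the flow is antisymmetric and divergence-free off `A ∪ Z`, the strength of
any flow equals its total flow out of such a set; for the maximal flow every edge leaving `S`
is saturated, so its strength is the capacity of the cut formed by those edges. Conversely,
for a flow and any separating cut set `π`, the vertices reachable from `A` without using `π`
form such a set whose leaving edges all lie in `π`, which bounds the strength by the
capacity of `π`.
-/

open Finset Filter Topology

theorem eventually_add_mul_le {a b c : ℝ} (hac : a ≤ c) (hb : 0 < b → a < c) :
    ∀ᶠ ε in 𝓝[>] 0, a + ε * b ≤ c := by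
  rcases le_or_gt b 0 with hb' | hb'
  · filter_upwards [self_mem_nhdsWithin] with ε hε
    nlinarith [Set.mem_Ioi.1 hε]
  · have hcont : Continuous fun ε : ℝ => a + ε * b := by fun_prop
    have : ∀ᶠ ε in 𝓝 (0 : ℝ), a + ε * b < c :=
      hcont.continuousAt.eventually_lt continuousAt_const (by simpa using hb hb')
    filter_upwards [nhdsWithin_le_nhds this] with ε h using h.le

theorem eventually_abs_add_mul_le {a b c : ℝ} (habs : |a| ≤ c) (hpos : 0 < b → a < c)
    (hneg : b < 0 → -c < a) : ∀ᶠ ε in 𝓝[>] 0, |a + ε * b| ≤ c := by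
  have hneg' : 0 < -b → -a < c := fun h => by linarith [hneg (by linarith)]
  filter_upwards [eventually_add_mul_le (le_of_abs_le habs) hpos,
    eventually_add_mul_le (neg_le_of_abs_le habs |> neg_le.1) hneg'] with ε h₁ h₂
  exact abs_le'.2 ⟨h₁, by linarith⟩

theorem sum_sum_eq_zero_of_antisymm {V : Type*} {θ : V → V → ℝ}
    (hθ : ∀ x y, θ x y = -θ y x) (S : Finset V) : ∑ x ∈ S, ∑ y ∈ S, θ x y = 0 := by
  have : ∑ x ∈ S, ∑ y ∈ S, θ x y = -∑ x ∈ S, ∑ y ∈ S, θ x y :=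
    calc ∑ x ∈ S, ∑ y ∈ S, θ x y = ∑ y ∈ S, ∑ x ∈ S, -θ y x :=
          sum_comm.trans <| sum_congr rfl fun _ _ => sum_congr rfl fun _ _ => hθ _ _
      _ = -∑ x ∈ S, ∑ y ∈ S, θ x y := by simp only [sum_neg_distrib]
  linarith

namespace SimpleGraph

namespace Walk

variable {V : Type*} {G : SimpleGraph V} [DecidableEq V]

def unitFlow : ∀ {u v : V}, G.Walk u v → V → V → ℝ
  | _, _, .nil => 0
  | u, _, .cons (v := v) _ p => fun x y =>
      ((if (x, y) = (u, v) then 1 else 0) - if (y, x) = (u, v) then 1 else 0) + p.unitFlow x y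

variable {u v : V}

theorem unitFlow_antisymm (p : G.Walk u v) (x y : V) : p.unitFlow x y = -p.unitFlow y x := by
  induction p with
  | nil => simp [unitFlow]
  | cons _ p ih => simp only [unitFlow, ih]; ring

theorem unitFlow_eq_zero_of_not_adj (p : G.Walk u v) {x y : V} (hxy : ¬ G.Adj x y) :
    p.unitFlow x y = 0 := by
  induction p with
  | nil => rfl
  | @cons a b _ h p ih =>
    have h₁ : (x, y) ≠ (a, b) := by rintro ⟨⟩; exact hxy h
    have h₂ : (y, x) ≠ (a, b) := by rintro ⟨⟩; exact hxy h.symm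
    simp [unitFlow, ih, h₁, h₂]

theorem sum_unitFlow [Fintype V] (p : G.Walk u v) (x : V) :
    ∑ y, p.unitFlow x y = (if x = u then 1 else 0) - if x = v then 1 else 0 := by
  induction p with
  | nil => simp [unitFlow]
  | cons _ p ih =>
    simp only [unitFlow, sum_add_distrib, sum_sub_distrib, ih, Prod.mk.injEq, ite_and]
    simp

theorem exists_dart_of_unitFlow_pos (p : G.Walk u v) {x y : V} (hpos : 0 < p.unitFlow x y) :
    ∃ d ∈ p.darts, d.toProd = (x, y) := by
  induction p with
  | nil => simp [unitFlow] at hpos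
  | @cons a b _ h p ih =>
    by_cases he : (x, y) = (a, b)
    · exact ⟨_, List.mem_cons_self, he.symm⟩
    · simp only [unitFlow, if_neg he] at hpos
      obtain ⟨d, hd, hdxy⟩ := ih (by split_ifs at hpos <;> linarith)
      exact ⟨d, List.mem_cons_of_mem _ hd, hdxy⟩

end Walk

variable {V : Type*} [Fintype V] (G : SimpleGraph V)

structure IsCapacitatedFlow (w : Sym2 V → ℝ) (A Z : Finset V) (θ : V → V → ℝ) : Prop where
  antisymm : ∀ x y, θ x y = -θ y x
  eq_zero_of_not_adj : ∀ x y, ¬ G.Adj x y → θ x y = 0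
  sum_eq_zero : ∀ x, x ∉ A → x ∉ Z → ∑ y, θ x y = 0
  abs_le : ∀ x y, |θ x y| ≤ w s(x, y)

def flowStrength (A : Finset V) (θ : V → V → ℝ) : ℝ := ∑ x ∈ A, ∑ y, θ x y

def Separates (A Z : Finset V) (π : Finset (Sym2 V)) : Prop :=
  ∀ u v, u ∈ A → v ∈ Z → ∀ p : G.Walk u v, ∃ e ∈ p.edges, e ∈ π

variable {G} {w : Sym2 V → ℝ} {A Z : Finset V} {θ : V → V → ℝ}

theorem isCapacitatedFlow_zero (hw : ∀ e, 0 ≤ w e) : G.IsCapacitatedFlow w A Z 0 :=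
  ⟨by simp, by simp, by simp, by simpa using fun _ _ => hw _⟩

theorem isCompact_setOf_isCapacitatedFlow : IsCompact {θ | G.IsCapacitatedFlow w A Z θ} := by
  have hbox : IsCompact (Set.univ.pi fun x => Set.univ.pi fun y =>
      Set.Icc (-w s(x, y)) (w s(x, y))) :=
    isCompact_univ_pi fun _ => isCompact_univ_pi fun _ => isCompact_Icc
  refine hbox.of_isClosed_subset ?_ fun θ hθ => by
    simpa only [Set.mem_pi, Set.mem_univ, true_implies, Set.mem_Icc, ← abs_le] using hθ.abs_le
  have hset : {θ | G.IsCapacitatedFlow w A Z θ} =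
      (⋂ x, ⋂ y, {θ : V → V → ℝ | θ x y = -θ y x}) ∩
      (⋂ x, ⋂ y, ⋂ _ : ¬ G.Adj x y, {θ | θ x y = 0}) ∩
      (⋂ x, ⋂ _ : x ∉ A, ⋂ _ : x ∉ Z, {θ | ∑ y, θ x y = 0}) ∩
      ⋂ x, ⋂ y, {θ | |θ x y| ≤ w s(x, y)} := by
    ext θ
    simp only [Set.mem_inter_iff, Set.mem_iInter, Set.mem_ofPred_eq]
    exact ⟨fun h => ⟨⟨⟨h.1, h.2⟩, h.3⟩, h.4⟩, fun ⟨⟨⟨h₁, h₂⟩, h₃⟩, h₄⟩ => ⟨h₁, h₂, h₃, h₄⟩⟩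
  rw [hset]
  refine .inter (.inter (.inter ?_ ?_) ?_) ?_ <;>
    refine isClosed_iInter fun x => isClosed_iInter fun y => ?_
  · exact isClosed_eq (by fun_prop) (by fun_prop)
  · exact isClosed_iInter fun _ => isClosed_eq (by fun_prop) (by fun_prop)
  · exact isClosed_iInter fun _ => isClosed_eq (by fun_prop) (by fun_prop)
  · exact isClosed_le (by fun_prop) (by fun_prop)

theorem exists_isMaxOn_flowStrength (hw : ∀ e, 0 ≤ w e) :
    ∃ θ, G.IsCapacitatedFlow w A Z θ ∧
      IsMaxOn (flowStrength A) {θ | G.IsCapacitatedFlow w A Z θ} θ :=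
  isCompact_setOf_isCapacitatedFlow.exists_isMaxOn ⟨0, isCapacitatedFlow_zero hw⟩
    (by unfold flowStrength; fun_prop : Continuous (flowStrength (V := V) A)).continuousOn

section Cut

variable (G) [DecidableEq V] [DecidableRel G.Adj]

def cutDarts (S : Finset V) : Finset (V × V) := (S ×ˢ Sᶜ).filter fun p => G.Adj p.1 p.2

def cutEdges (S : Finset V) : Finset (Sym2 V) := (G.cutDarts S).image fun p => s(p.1, p.2)

variable {G}

theorem mem_cutDarts {S : Finset V} {x y : V} :
    (x, y) ∈ G.cutDarts S ↔ (x ∈ S ∧ y ∉ S) ∧ G.Adj x y := by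
  simp [cutDarts]

theorem injOn_mk_cutDarts (S : Finset V) :
    Set.InjOn (fun p : V × V => s(p.1, p.2)) (G.cutDarts S) := by
  rintro ⟨x, y⟩ hxy ⟨x', y'⟩ hxy' he
  simp only [mem_coe, mem_cutDarts] at hxy hxy'
  rcases Sym2.eq_iff.1 he with ⟨rfl, rfl⟩ | ⟨rfl, -⟩
  · rfl
  · exact absurd hxy.1.1 hxy'.1.2

theorem cutEdges_subset_edgeSet (S : Finset V) : ↑(G.cutEdges S) ⊆ G.edgeSet := by
  rintro _ he
  obtain ⟨⟨x, y⟩, hxy, rfl⟩ := mem_image.1 he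
  exact (mem_cutDarts.1 hxy).2

theorem separates_cutEdges {S : Finset V} (hAS : A ⊆ S) (hSZ : Disjoint S Z) :
    G.Separates A Z (G.cutEdges S) := by
  intro u v hu hv p
  obtain ⟨d, hd, hdS, hdS'⟩ :=
    p.exists_boundary_dart (↑S) (hAS hu) fun hvS => Finset.disjoint_left.1 hSZ hvS hv
  exact ⟨d.edge, List.mem_map_of_mem hd, mem_image_of_mem _ (mem_cutDarts.2 ⟨⟨hdS, hdS'⟩, d.adj⟩)⟩

theorem flowStrength_eq_sum_sum_compl {S : Finset V} (hanti : ∀ x y, θ x y = -θ y x)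
    (hdiv : ∀ x, x ∉ A → x ∉ Z → ∑ y, θ x y = 0) (hAS : A ⊆ S) (hSZ : Disjoint S Z) :
    flowStrength A θ = ∑ x ∈ S, ∑ y ∈ Sᶜ, θ x y :=
  calc flowStrength A θ = ∑ x ∈ S, ∑ y, θ x y :=
        sum_subset hAS fun x hxS hxA => hdiv x hxA (Finset.disjoint_left.1 hSZ hxS)
    _ = ∑ x ∈ S, ∑ y ∈ S, θ x y + ∑ x ∈ S, ∑ y ∈ Sᶜ, θ x y := by
        rw [← sum_add_distrib]
        exact sum_congr rfl fun x _ => (sum_add_sum_compl S _).symm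
    _ = ∑ x ∈ S, ∑ y ∈ Sᶜ, θ x y := by rw [sum_sum_eq_zero_of_antisymm hanti, zero_add]

namespace IsCapacitatedFlow

variable {S : Finset V} (hθ : G.IsCapacitatedFlow w A Z θ) (hAS : A ⊆ S) (hSZ : Disjoint S Z)
include hθ hAS hSZ

theorem flowStrength_eq_sum_cutDarts : flowStrength A θ = ∑ p ∈ G.cutDarts S, θ p.1 p.2 := by
  rw [flowStrength_eq_sum_sum_compl hθ.antisymm hθ.sum_eq_zero hAS hSZ, ← sum_product', cutDarts,
    sum_filter_of_ne]
  exact fun p _ hp => by_contra fun h => hp (hθ.eq_zero_of_not_adj _ _ h)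

theorem flowStrength_le_sum_cutEdges : flowStrength A θ ≤ ∑ e ∈ G.cutEdges S, w e := by
  rw [hθ.flowStrength_eq_sum_cutDarts hAS hSZ, cutEdges, sum_image (injOn_mk_cutDarts S)]
  exact sum_le_sum fun p _ => (le_abs_self _).trans (hθ.abs_le _ _)

theorem flowStrength_eq_sum_cutEdges (hsat : ∀ p ∈ G.cutDarts S, θ p.1 p.2 = w s(p.1, p.2)) :
    flowStrength A θ = ∑ e ∈ G.cutEdges S, w e := by
  rw [hθ.flowStrength_eq_sum_cutDarts hAS hSZ, cutEdges, sum_image (injOn_mk_cutDarts S)]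
  exact sum_congr rfl hsat

end IsCapacitatedFlow

end Cut

section Reachable

variable (G)

open Classical in
noncomputable def reachableVia (A : Finset V) (P : G.Dart → Prop) : Finset V :=
  {x | ∃ a ∈ A, ∃ p : G.Walk a x, ∀ d ∈ p.darts, P d}

variable {G} {P : G.Dart → Prop}

theorem mem_reachableVia {x : V} :
    x ∈ G.reachableVia A P ↔ ∃ a ∈ A, ∃ p : G.Walk a x, ∀ d ∈ p.darts, P d := by
  simp [reachableVia]

theorem subset_reachableVia : A ⊆ G.reachableVia A P :=
  fun a ha => mem_reachableVia.2 ⟨a, ha, .nil, by simp⟩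

theorem snd_mem_reachableVia {d : G.Dart} (hd : d.fst ∈ G.reachableVia A P) (hP : P d) :
    d.snd ∈ G.reachableVia A P := by
  obtain ⟨a, ha, p, hp⟩ := mem_reachableVia.1 hd
  refine mem_reachableVia.2 ⟨a, ha, p.concat d.adj, fun d' hd' => ?_⟩
  rw [Walk.darts_concat, List.concat_eq_append, List.mem_append, List.mem_singleton] at hd'
  rcases hd' with hd' | rfl
  exacts [hp d' hd', hP]

end Reachable

namespace IsCapacitatedFlow

theorem exists_flowStrength_gt (hθ : G.IsCapacitatedFlow w A Z θ) (hAZ : Disjoint A Z)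
    {a z : V} (ha : a ∈ A) (hz : z ∈ Z) (p : G.Walk a z)
    (hp : ∀ d ∈ p.darts, θ d.fst d.snd < w d.edge) :
    ∃ θ', G.IsCapacitatedFlow w A Z θ' ∧ flowStrength A θ < flowStrength A θ' := by
  classical
  have hres : ∀ x y, 0 < p.unitFlow x y → θ x y < w s(x, y) := fun x y hpos => by
    obtain ⟨d, hd, hdxy⟩ := p.exists_dart_of_unitFlow_pos hpos
    simpa [Dart.edge, hdxy] using hp d hd
  have hres' : ∀ x y, p.unitFlow x y < 0 → -w s(x, y) < θ x y := fun x y hneg => by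
    have := hres y x (by rw [p.unitFlow_antisymm]; linarith)
    rw [Sym2.eq_swap, hθ.antisymm y x] at this
    linarith
  have hev : ∀ q : V × V,
      ∀ᶠ ε in 𝓝[>] 0, |θ q.1 q.2 + ε * p.unitFlow q.1 q.2| ≤ w s(q.1, q.2) :=
    fun q => eventually_abs_add_mul_le (hθ.abs_le _ _) (hres _ _) (hres' _ _)
  obtain ⟨ε, hcap, hε⟩ := ((eventually_all.2 hev).and self_mem_nhdsWithin).exists
  have hzA : z ∉ A := fun hzA => Finset.disjoint_left.1 hAZ hzA hz
  refine ⟨fun x y => θ x y + ε * p.unitFlow x y,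
    ⟨fun x y => ?_, fun x y hxy => ?_, fun x hxA hxZ => ?_, fun x y => hcap (x, y)⟩, ?_⟩
  · rw [hθ.antisymm x y, p.unitFlow_antisymm x y]
    ring
  · simp [hθ.eq_zero_of_not_adj x y hxy, p.unitFlow_eq_zero_of_not_adj hxy]
  · have hxa : x ≠ a := fun h => hxA (h ▸ ha)
    have hxz : x ≠ z := fun h => hxZ (h ▸ hz)
    simp [sum_add_distrib, ← mul_sum, p.sum_unitFlow, hθ.sum_eq_zero x hxA hxZ, hxa, hxz]
  · simp only [flowStrength, sum_add_distrib, ← mul_sum, p.sum_unitFlow, sum_sub_distrib,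
      sum_ite_eq', if_pos ha, if_neg hzA]
    linarith

theorem exists_cut_eq_of_isMaxOn (hθ : G.IsCapacitatedFlow w A Z θ)
    (hmax : IsMaxOn (flowStrength A) {θ | G.IsCapacitatedFlow w A Z θ} θ) (hAZ : Disjoint A Z) :
    ∃ π : Finset (Sym2 V), ↑π ⊆ G.edgeSet ∧ G.Separates A Z π ∧
      ∑ e ∈ π, w e = flowStrength A θ := by
  classical
  set S := G.reachableVia A fun d => θ d.fst d.snd < w d.edge
  have hAS : A ⊆ S := subset_reachableVia
  have hSZ : Disjoint S Z := by
    refine Finset.disjoint_left.2 fun z hzS hz => ?_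
    obtain ⟨a, ha, p, hp⟩ := mem_reachableVia.1 hzS
    obtain ⟨θ', hθ', hlt⟩ := hθ.exists_flowStrength_gt hAZ ha hz p hp
    exact (hmax hθ').not_gt hlt
  have hsat : ∀ q ∈ G.cutDarts S, θ q.1 q.2 = w s(q.1, q.2) := by
    rintro ⟨x, y⟩ hq
    obtain ⟨⟨hx, hy⟩, hxy⟩ := mem_cutDarts.1 hq
    refine le_antisymm ((le_abs_self _).trans (hθ.abs_le x y)) (not_lt.1 fun hlt => hy ?_)
    exact snd_mem_reachableVia (d := ⟨(x, y), hxy⟩) hx hlt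
  exact ⟨G.cutEdges S, cutEdges_subset_edgeSet S, separates_cutEdges hAS hSZ,
    (hθ.flowStrength_eq_sum_cutEdges hAS hSZ hsat).symm⟩

theorem flowStrength_le_sum_of_separates (hθ : G.IsCapacitatedFlow w A Z θ)
    (hw : ∀ e, 0 ≤ w e) {π : Finset (Sym2 V)} (hπ : G.Separates A Z π) :
    flowStrength A θ ≤ ∑ e ∈ π, w e := by
  classical
  set S := G.reachableVia A fun d => d.edge ∉ π
  have hSZ : Disjoint S Z := by
    refine Finset.disjoint_left.2 fun z hzS hz => ?_
    obtain ⟨a, ha, p, hp⟩ := mem_reachableVia.1 hzS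
    obtain ⟨e, he, heπ⟩ := hπ a z ha hz p
    obtain ⟨d, hd, rfl⟩ := List.mem_map.1 he
    exact hp d hd heπ
  have hcut : G.cutEdges S ⊆ π := by
    refine image_subset_iff.2 fun ⟨x, y⟩ hq => by_contra fun h => ?_
    obtain ⟨⟨hx, hy⟩, hxy⟩ := mem_cutDarts.1 hq
    exact hy (snd_mem_reachableVia (d := ⟨(x, y), hxy⟩) hx h)
  calc flowStrength A θ ≤ ∑ e ∈ G.cutEdges S, w e :=
        hθ.flowStrength_le_sum_cutEdges subset_reachableVia hSZ
    _ ≤ ∑ e ∈ π, w e := sum_le_sum_of_subset_of_nonneg hcut fun e _ _ => hw e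

end IsCapacitatedFlow

end SimpleGraph

open SimpleGraph in
theorem maxFlow_eq_minCut_general {V : Type*} [Fintype V]
    (G : SimpleGraph V) (w : Sym2 V → ℝ) (hw : ∀ e, 0 ≤ w e)
    (A Z : Finset V) (hAZ : Disjoint A Z) :
    ∃ m : ℝ,
      IsGreatest {str : ℝ | ∃ θ : V → V → ℝ,
          (∀ x y, θ x y = -θ y x) ∧
          (∀ x y, ¬ G.Adj x y → θ x y = 0) ∧
          (∀ x, x ∉ A → x ∉ Z → ∑ y, θ x y = 0) ∧
          (∀ x y, |θ x y| ≤ w s(x, y)) ∧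
          0 ≤ str ∧ str = ∑ x ∈ A, ∑ y, θ x y} m ∧
      IsLeast {cutVal : ℝ | ∃ π : Finset (Sym2 V),
          (↑π ⊆ G.edgeSet) ∧
          (∀ (u v : V), u ∈ A → v ∈ Z → ∀ p : G.Walk u v, ∃ e ∈ p.edges, e ∈ π) ∧
          cutVal = ∑ e ∈ π, w e} m := by
  obtain ⟨θ, hθ, hmax⟩ := exists_isMaxOn_flowStrength (G := G) (A := A) (Z := Z) hw
  obtain ⟨π, hπE, hπ, hπw⟩ := hθ.exists_cut_eq_of_isMaxOn hmax hAZ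
  refine ⟨flowStrength A θ, ⟨⟨θ, hθ.antisymm, hθ.eq_zero_of_not_adj, hθ.sum_eq_zero, hθ.abs_le,
    ?_, rfl⟩, ?_⟩, ⟨π, hπE, hπ, hπw.symm⟩, ?_⟩
  · simpa [flowStrength] using hmax (isCapacitatedFlow_zero hw)
  · rintro _ ⟨θ', h₁, h₂, h₃, h₄, -, rfl⟩
    exact hmax ⟨h₁, h₂, h₃, h₄⟩
  · rintro _ ⟨π', -, hπ', rfl⟩
    exact hθ.flowStrength_le_sum_of_separates hw hπ'

/-- **Max-Flow-Min-Cut theorem** for a finite network `G` with edge capacities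
`w(e) ≥ 0` and disjoint vertex sets `A` and `Z`: the maximal strength of a flow
`θ` from `A` to `Z` satisfying `|θ(e)| ≤ w(e)` on all directed edges equals the
minimum over cut sets `π` separating `A` from `Z` of `∑_{e ∈ π} w(e)`.
A flow from `A` to `Z` is an antisymmetric function on directed edges,
supported on the edges of `G`, with zero divergence outside `A ∪ Z` and
nonnegative total outflow from `A` (the strength); a cut set `π ⊆ E(G)`
separates `A` and `Z` if every path from `A` to `Z` uses an edge of `π`. -/
theorem maxFlow_eq_minCut {V : Type*} [Fintype V] [DecidableEq V]
    (G : SimpleGraph V) (w : Sym2 V → ℝ) (hw : ∀ e, 0 ≤ w e)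
    (A Z : Finset V) (hAZ : Disjoint A Z) :
    ∃ m : ℝ,
      IsGreatest {str : ℝ | ∃ θ : V → V → ℝ,
          (∀ x y, θ x y = -θ y x) ∧
          (∀ x y, ¬ G.Adj x y → θ x y = 0) ∧
          (∀ x, x ∉ A → x ∉ Z → ∑ y, θ x y = 0) ∧
          (∀ x y, |θ x y| ≤ w s(x, y)) ∧
          0 ≤ str ∧ str = ∑ x ∈ A, ∑ y, θ x y} m ∧
      IsLeast {cutVal : ℝ | ∃ π : Finset (Sym2 V),
          (↑π ⊆ G.edgeSet) ∧
          (∀ (u v : V), u ∈ A → v ∈ Z → ∀ p : G.Walk u v, ∃ e ∈ p.edges, e ∈ π) ∧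
          cutVal = ∑ e ∈ π, w e} m :=
  maxFlow_eq_minCut_general G w hw A Z hAZ
end
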